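/- Tower-of-latents extension of TSM: Let (θ_0, z) have C^1 joint density p on ℝ^d × ℝ^m, θ_t = α θ_0 + σ ε with ε ~ N(0, I_d) independent of (θ_0, z). Then E[ (1/α) ∇_{θ_0} log p(θ_0, z) | θ_t ] = E[ (α θ_0 − θ_t)/σ² | θ_t ] almost surely, i.e., the LTSM and DSM regression targets have the same conditional expectation given θ_t. -/

import Mathlib

open MeasureTheory Real

/-! For fixed `z`, `p ∇ log p = ∇p`, so the posterior-weighted score is `∫ K ∇p / p_t`.
Integrating by parts moves the gradient onto the Gaussian kernel, whose score in `θ₀` is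
`(α / σ²)(θ_t − α θ₀)`; this makes the LTSM target `α` times the DSM target on every slice `z`,
and the Fubini interchanges reassemble the slices. -/

section

variable {E : Type*} [NormedAddCommGroup E] [InnerProductSpace ℝ E] [CompleteSpace E]

theorem HasGradientAt.log {f : E → ℝ} {f' x : E} (hf : HasGradientAt f f' x) (hx : f x ≠ 0) :
    HasGradientAt (fun u => Real.log (f u)) ((f x)⁻¹ • f') x := by
  rw [hasGradientAt_iff_hasFDerivAt, map_smul]
  exact (hasGradientAt_iff_hasFDerivAt.mp hf).log hx

theorem hasGradientAt_gaussian (c α σ : ℝ) (a u : E) :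
    HasGradientAt (fun v => c * exp (-‖a - α • v‖ ^ 2 / (2 * σ ^ 2)))
      ((α / σ ^ 2 * (c * exp (-‖a - α • u‖ ^ 2 / (2 * σ ^ 2)))) • (a - α • u)) u := by
  have h := ((((hasFDerivAt_const a u).fun_sub ((hasFDerivAt_id u).fun_const_smul α)).norm_sq
    |>.fun_neg.mul_const (2 * σ ^ 2)⁻¹).exp).const_mul c
  simp only [← div_eq_mul_inv] at h
  rw [hasGradientAt_iff_hasFDerivAt]
  refine h.congr_fderiv (ContinuousLinearMap.ext fun y => ?_)
  simp
  ring

section Integral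

variable [MeasurableSpace E] {μ : Measure E}

theorem integral_smul_gradient_eq_of_integral_by_parts {f K : E → ℝ} {α σ : ℝ} {a : E}
    (hK : ∀ u, gradient K u = (α / σ ^ 2 * K u) • (a - α • u))
    (hibp : (∫ u, K u • gradient f u ∂μ) + (∫ u, f u • gradient K u ∂μ) = 0) :
    ∫ u, K u • gradient f u ∂μ = (α / σ ^ 2) • ∫ u, (f u * K u) • (α • u - a) ∂μ := by
  have hscore : (fun u => f u • gradient K u) =
      fun u => -((α / σ ^ 2) • (f u * K u) • (α • u - a)) := by
    funext u
    rw [hK, smul_smul, smul_smul, ← smul_neg, neg_sub]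
    ring_nf
  rwa [hscore, integral_neg, integral_smul, ← sub_eq_add_neg, sub_eq_zero] at hibp

theorem one_div_smul_integral_smul_gradient_log_eq {f K : E → ℝ} {α σ c : ℝ} {a : E}
    (hα : α ≠ 0) (hf : Differentiable ℝ f) (hf_ne : ∀ u, f u ≠ 0)
    (hK : ∀ u, gradient K u = (α / σ ^ 2 * K u) • (a - α • u))
    (hibp : (∫ u, K u • gradient f u ∂μ) + (∫ u, f u • gradient K u ∂μ) = 0) :
    (1 / α) • ∫ u, (f u * K u / c) • gradient (fun v => Real.log (f v)) u ∂μ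
      = ∫ u, (f u * K u / c) • ((σ ^ 2)⁻¹ • (α • u - a)) ∂μ := by
  have hlog : ∀ u, gradient (fun v => Real.log (f v)) u = (f u)⁻¹ • gradient f u := fun u =>
    ((hf u).hasGradientAt.log (hf_ne u)).gradient
  calc (1 / α) • ∫ u, (f u * K u / c) • gradient (fun v => Real.log (f v)) u ∂μ
      = (1 / α) • c⁻¹ • ∫ u, K u • gradient f u ∂μ := by
        congr 1
        rw [← integral_smul]
        refine integral_congr_ae (ae_of_all _ fun u => ?_)
        simp only [hlog, smul_smul]
        field_simp [hf_ne u]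
    _ = ∫ u, (f u * K u / c) • ((σ ^ 2)⁻¹ • (α • u - a)) ∂μ := by
        rw [integral_smul_gradient_eq_of_integral_by_parts hK hibp, smul_smul, smul_smul,
          ← integral_smul]
        refine integral_congr_ae (ae_of_all _ fun u => ?_)
        simp only [smul_smul]
        field_simp

end Integral

end

theorem stmt13_general {d m : ℕ}
    (p : EuclideanSpace ℝ (Fin d) → EuclideanSpace ℝ (Fin m) → ℝ)
    (hp_pos : ∀ θ0 z, 0 < p θ0 z)
    (hp_C1 : ∀ z, ContDiff ℝ 1 (fun θ0 => p θ0 z))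
    (α σ : ℝ) (hα : 0 < α)
    (K : EuclideanSpace ℝ (Fin d) → EuclideanSpace ℝ (Fin d) → ℝ)
    (hK : K = fun θt θ0 => (2 * π * σ ^ 2) ^ (-(d : ℝ) / 2) *
        Real.exp (-‖θt - α • θ0‖ ^ 2 / (2 * σ ^ 2)))
    (pt : EuclideanSpace ℝ (Fin d) → ℝ)
    (θt : EuclideanSpace ℝ (Fin d))
    -- integration by parts in θ0 with vanishing boundary term
    (hibp : ∀ z, (∫ θ0, K θt θ0 • gradient (fun u => p u z) θ0)
        + (∫ θ0, p θ0 z • gradient (fun u => K θt u) θ0) = 0)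
    -- Fubini-type interchange for the two posterior-weighted integrands
    (hfub1 : (∫ θ0, ∫ z, (p θ0 z * K θt θ0 / pt θt) •
          gradient (fun u => Real.log (p u z)) θ0)
        = ∫ z, ∫ θ0, (p θ0 z * K θt θ0 / pt θt) •
            gradient (fun u => Real.log (p u z)) θ0)
    (hfub2 : (∫ θ0, ∫ z, (p θ0 z * K θt θ0 / pt θt) • ((σ ^ 2)⁻¹ • (α • θ0 - θt)))
        = ∫ z, ∫ θ0, (p θ0 z * K θt θ0 / pt θt) • ((σ ^ 2)⁻¹ • (α • θ0 - θt))) :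
    (1 / α) • (∫ θ0, ∫ z, (p θ0 z * K θt θ0 / pt θt) •
        gradient (fun u => Real.log (p u z)) θ0)
      = ∫ θ0, ∫ z, (p θ0 z * K θt θ0 / pt θt) •
          ((σ ^ 2)⁻¹ • (α • θ0 - θt)) := by
  have hK_score : ∀ u, gradient (K θt) u = (α / σ ^ 2 * K θt u) • (θt - α • u) := fun u => by
    subst hK
    exact (hasGradientAt_gaussian _ α σ θt u).gradient
  rw [hfub1, hfub2, ← integral_smul]
  refine integral_congr_ae (ae_of_all _ fun z => ?_)
  exact one_div_smul_integral_smul_gradient_log_eq hα.ne' ((hp_C1 z).differentiable one_ne_zero)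
    (fun u => (hp_pos u z).ne') hK_score (hibp z)

/-- LTSM and DSM regression targets have the same conditional expectation
given `θ_t`. Here `(θ_0, z)` has positive C¹ joint density `p` on `ℝ^d × ℝ^m`,
`K θ_t θ_0 = N(θ_t; α θ_0, σ² I)` is the Gaussian forward kernel, `p_t` the marginal of
`θ_t`, and conditional expectations are integrals against the posterior density
`p(θ_0, z) K(θ_t, θ_0)/p_t(θ_t)`. Under integration by parts with vanishing boundary
terms (`hibp`) and a Fubini-type interchange (`hfub`),
`E[(1/α) ∇_{θ_0} log p(θ_0, z) | θ_t] = E[(α θ_0 − θ_t)/σ² | θ_t]`. -/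
theorem stmt13 {d m : ℕ}
    (p : EuclideanSpace ℝ (Fin d) → EuclideanSpace ℝ (Fin m) → ℝ)
    (hp_pos : ∀ θ0 z, 0 < p θ0 z)
    (hp_C1 : ∀ z, ContDiff ℝ 1 (fun θ0 => p θ0 z))
    (hp_density : ∫ θ0, ∫ z, p θ0 z = 1)
    (α σ : ℝ) (hα : 0 < α) (hσ : 0 < σ)
    (K : EuclideanSpace ℝ (Fin d) → EuclideanSpace ℝ (Fin d) → ℝ)
    (hK : K = fun θt θ0 => (2 * π * σ ^ 2) ^ (-(d : ℝ) / 2) *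
        Real.exp (-‖θt - α • θ0‖ ^ 2 / (2 * σ ^ 2)))
    (pt : EuclideanSpace ℝ (Fin d) → ℝ)
    (hpt : pt = fun θt => ∫ θ0, ∫ z, p θ0 z * K θt θ0)
    (θt : EuclideanSpace ℝ (Fin d)) (hpos : 0 < pt θt)
    -- integration by parts in θ0 with vanishing boundary term
    (hibp : ∀ z, (∫ θ0, K θt θ0 • gradient (fun u => p u z) θ0)
        + (∫ θ0, p θ0 z • gradient (fun u => K θt u) θ0) = 0)
    -- Fubini-type interchange for the two posterior-weighted integrands
    (hfub1 : (∫ θ0, ∫ z, (p θ0 z * K θt θ0 / pt θt) •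
          gradient (fun u => Real.log (p u z)) θ0)
        = ∫ z, ∫ θ0, (p θ0 z * K θt θ0 / pt θt) •
            gradient (fun u => Real.log (p u z)) θ0)
    (hfub2 : (∫ θ0, ∫ z, (p θ0 z * K θt θ0 / pt θt) • ((σ ^ 2)⁻¹ • (α • θ0 - θt)))
        = ∫ z, ∫ θ0, (p θ0 z * K θt θ0 / pt θt) • ((σ ^ 2)⁻¹ • (α • θ0 - θt))) :
    (1 / α) • (∫ θ0, ∫ z, (p θ0 z * K θt θ0 / pt θt) •
        gradient (fun u => Real.log (p u z)) θ0)
      = ∫ θ0, ∫ z, (p θ0 z * K θt θ0 / pt θt) •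
          ((σ ^ 2)⁻¹ • (α • θ0 - θt)) :=
  stmt13_general p hp_pos hp_C1 α σ hα K hK pt θt hibp hfub1 hfub2
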